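/- If 1 < s < √2, then the restricted tent map T_s : [0,1] → [0,1] is not transitive. -/

import Mathlib

open Set MeasureTheory

noncomputable section

/-- The unit interval `[0,1]` as a subset of `ℝ`. -/
def I01 : Set ℝ := Set.Icc 0 1

/-- `τ` is piecewise monotonic on `[0,1]`: there is a partition
`0 = a 0 < a 1 < ⋯ < a n = 1` such that `τ` is continuous and strictly
monotonic on each open interval `(a i, a (i+1))`. -/
def PiecewiseMonotonic (τ : ℝ → ℝ) : Prop :=
  ∃ n : ℕ, 0 < n ∧ ∃ a : ℕ → ℝ, a 0 = 0 ∧ a n = 1 ∧ (∀ i < n, a i < a (i + 1)) ∧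
    ∀ i < n, ContinuousOn τ (Set.Ioo (a i) (a (i + 1))) ∧
      (StrictMonoOn τ (Set.Ioo (a i) (a (i + 1))) ∨ StrictAntiOn τ (Set.Ioo (a i) (a (i + 1))))

/-- `τ` is uniformly piecewise linear with slopes `±s`. -/
def UniformlyPiecewiseLinear (τ : ℝ → ℝ) (s : ℝ) : Prop :=
  ∃ n : ℕ, 0 < n ∧ ∃ a : ℕ → ℝ, a 0 = 0 ∧ a n = 1 ∧ (∀ i < n, a i < a (i + 1)) ∧
    ∀ i < n, ∃ ε : ℝ, (ε = 1 ∨ ε = -1) ∧ ∃ d : ℝ,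
      ∀ x ∈ Set.Ioo (a i) (a (i + 1)), τ x = ε * s * x + d

/-- The measure `m` is scaled by `τ` by the factor `s`. -/
def ScaledBy (τ : ℝ → ℝ) (m : Measure ℝ) (s : ℝ) : Prop :=
  ∀ E : Set ℝ, E ⊆ I01 → MeasurableSet E → Set.InjOn τ E →
    m (τ '' E) = ENNReal.ofReal s * m E

/-- `m` is a Borel probability measure on `[0,1]`. -/
def ProbOnI (m : Measure ℝ) : Prop := IsProbabilityMeasure m ∧ m I01 = 1

/-- `m` has full support in `[0,1]`. -/
def FullSupportOnI (m : Measure ℝ) : Prop :=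
  ∀ U : Set ℝ, IsOpen U → (U ∩ I01).Nonempty → 0 < m (U ∩ I01)

/-- `m` is non-atomic. -/
def NonAtomic (m : Measure ℝ) : Prop := ∀ x : ℝ, m {x} = 0

/-- `h` is an increasing homeomorphism of `[0,1]` onto itself. -/
def IncSelfHomeoI (h : ℝ → ℝ) : Prop :=
  ContinuousOn h I01 ∧ StrictMonoOn h I01 ∧ h '' I01 = I01

/-- `h` is a homeomorphism of `[0,1]` onto itself. -/
def SelfHomeoI (h : ℝ → ℝ) : Prop :=
  ContinuousOn h I01 ∧ Set.BijOn h I01 I01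

/-- `τ` is topologically transitive on `K`. -/
def TransitiveOn (τ : ℝ → ℝ) (K : Set ℝ) : Prop :=
  ∀ U V : Set ℝ, IsOpen U → IsOpen V → (U ∩ K).Nonempty → (V ∩ K).Nonempty →
    ∃ n : ℕ, ((τ^[n] '' (U ∩ K)) ∩ (V ∩ K)).Nonempty

/-- `τ` is topologically mixing on `K`. -/
def MixingOn (τ : ℝ → ℝ) (K : Set ℝ) : Prop :=
  ∀ U V : Set ℝ, IsOpen U → IsOpen V → (U ∩ K).Nonempty → (V ∩ K).Nonempty →
    ∃ N : ℕ, ∀ n ≥ N, ((τ^[n] '' (U ∩ K)) ∩ (V ∩ K)).Nonempty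

/-- `τ` is topologically exact on `K`. -/
def ExactOn (τ : ℝ → ℝ) (K : Set ℝ) : Prop :=
  ∀ U : Set ℝ, IsOpen U → (U ∩ K).Nonempty → ∃ n : ℕ, τ^[n] '' (U ∩ K) = K

/-- `τ` is essentially injective: there are no two disjoint nondegenerate
intervals in `[0,1]` with the same image under `τ`. -/
def EssentiallyInjective (τ : ℝ → ℝ) : Prop :=
  ¬ ∃ a b c d : ℝ, a < b ∧ c < d ∧ Set.Icc a b ⊆ I01 ∧ Set.Icc c d ⊆ I01 ∧
    Disjoint (Set.Icc a b) (Set.Icc c d) ∧ τ '' Set.Icc a b = τ '' Set.Icc c d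

/-- The restricted tent map with slopes `±s`. -/
def tent (s : ℝ) (x : ℝ) : ℝ :=
  if x ≤ 1 - 1 / s then 1 + s * (x - (1 - 1 / s)) else 1 - s * (x - (1 - 1 / s))

/-- `τ` is unimodal. -/
def Unimodal (τ : ℝ → ℝ) : Prop :=
  ContinuousOn τ I01 ∧ ∃ c : ℝ, 0 < c ∧ c < 1 ∧
    StrictMonoOn τ (Set.Icc 0 c) ∧ StrictAntiOn τ (Set.Icc c 1)

/-! Let `p = s / (s + 1)`, the fixed point of the decreasing branch, and `b = s² - s = T²(0)`.
Since `T(0) = 2 - s ≥ p` exactly when `s² ≤ 2`, `T` maps `[0, b]` into `[p, 1]`, and `T²`, which is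
affine with slopes `∓s²` on either side of the turning point and vanishes there, maps `[0, b]`
into itself. For `s² < 2` we have `b < p`, so the orbit of `[0, b)` never meets the gap `(b, p)`. -/

theorem Set.MapsTo.iterate_union_of_iterate_two {α : Type*} {f : α → α} {A B : Set α}
    (hAB : MapsTo f A B) (hA : MapsTo f^[2] A A) (n : ℕ) : MapsTo f^[n] A (A ∪ B) := by
  have heven (k : ℕ) : MapsTo f^[2 * k] A A := by
    rw [Function.iterate_mul]
    exact hA.iterate k
  obtain ⟨k, rfl | rfl⟩ := Nat.even_or_odd' n
  · exact (heven k).mono_right subset_union_left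
  · rw [Function.iterate_succ']
    exact (hAB.comp (heven k)).mono_right subset_union_right

theorem not_transitiveOn_of_mapsTo_iterate {f : ℝ → ℝ} {K U V W : Set ℝ}
    (hU : IsOpen U) (hV : IsOpen V) (hUK : (U ∩ K).Nonempty) (hVK : (V ∩ K).Nonempty)
    (hW : ∀ n, MapsTo f^[n] (U ∩ K) W) (hVW : Disjoint V W) : ¬ TransitiveOn f K := by
  intro htr
  obtain ⟨n, _, ⟨x, hx, rfl⟩, hy, -⟩ := htr U V hU hV hUK hVK
  exact hVW.ne_of_mem hy (hW n hx) rfl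

section TentMap

variable {s x : ℝ}

theorem mul_one_sub_one_div_self (hs : s ≠ 0) : s * (1 - 1 / s) = s - 1 := by
  field_simp

theorem tent_of_le (hx : x ≤ 1 - 1 / s) : tent s x = 1 + s * (x - (1 - 1 / s)) :=
  if_pos hx

theorem tent_of_gt (hx : 1 - 1 / s < x) : tent s x = 1 - s * (x - (1 - 1 / s)) :=
  if_neg hx.not_ge

theorem tent_mapsTo_Icc_fixedPoint (h1 : 1 < s) (h2 : s ^ 2 ≤ 2) :
    MapsTo (tent s) (Icc 0 (s / (s + 1))) (Icc (s / (s + 1)) 1) := by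
  have hs : 0 < s := by linarith
  have hc := mul_one_sub_one_div_self hs.ne'
  have hp : s / (s + 1) * (s + 1) = s := div_mul_cancel₀ s (by linarith)
  rintro x ⟨hx0, hxp⟩
  rcases le_or_gt x (1 - 1 / s) with hxc | hxc
  · rw [tent_of_le hxc]
    constructor <;> nlinarith
  · rw [tent_of_gt hxc]
    constructor <;> nlinarith

theorem tent_iterate_two_mapsTo_Icc (h1 : 1 < s) (h2 : s ^ 2 ≤ 2) :
    MapsTo (tent s)^[2] (Icc 0 (s ^ 2 - s)) (Icc 0 (s ^ 2 - s)) := by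
  have hs : 0 < s := by linarith
  have hc := mul_one_sub_one_div_self hs.ne'
  have hbp : s ^ 2 - s ≤ s / (s + 1) := by
    rw [le_div_iff₀ (by linarith)]; nlinarith
  rintro x ⟨hx0, hxb⟩
  have hTx := tent_mapsTo_Icc_fixedPoint h1 h2 ⟨hx0, hxb.trans hbp⟩
  have hp : s / (s + 1) * (s + 1) = s := div_mul_cancel₀ s (by linarith)
  have hpc : 1 - 1 / s < s / (s + 1) := by nlinarith
  rw [Function.iterate_succ_apply', Function.iterate_one, tent_of_gt (hpc.trans_le hTx.1)]
  rcases le_or_gt x (1 - 1 / s) with hxc | hxc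
  · rw [tent_of_le hxc]
    constructor <;> nlinarith
  · rw [tent_of_gt hxc]
    constructor <;> nlinarith

end TentMap

/-- For `1 < s < √2` the restricted tent map `T_s` is not transitive. -/
theorem stmt10 (s : ℝ) (h1 : 1 < s) (h2 : s < Real.sqrt 2) :
    ¬ TransitiveOn (tent s) I01 := by
  have hs2 : s ^ 2 < 2 := (Real.lt_sqrt (by linarith)).1 h2
  have hb : 0 < s ^ 2 - s := by nlinarith
  have hbp : s ^ 2 - s < s / (s + 1) := by
    rw [lt_div_iff₀ (by linarith)]; nlinarith
  have horbit := ((tent_mapsTo_Icc_fixedPoint h1 hs2.le).mono_left (Icc_subset_Icc_right hbp.le))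
    |>.iterate_union_of_iterate_two (tent_iterate_two_mapsTo_Icc h1 hs2.le)
  have hp1 : s / (s + 1) < 1 := (div_lt_one (by linarith)).2 (by linarith)
  refine not_transitiveOn_of_mapsTo_iterate (U := Iio (s ^ 2 - s))
    (V := Ioo (s ^ 2 - s) (s / (s + 1))) isOpen_Iio isOpen_Ioo ⟨0, hb, le_rfl, zero_le_one⟩
    ⟨(s ^ 2 - s + s / (s + 1)) / 2, ⟨by linarith, by linarith⟩, by linarith, by linarith⟩
    (fun n => (horbit n).mono_left fun x hx => ⟨hx.2.1, hx.1.le⟩) ?_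
  rw [disjoint_union_right]
  constructor <;> refine Set.disjoint_left.2 fun x hx hx' => ?_ <;> linarith [hx.1, hx.2, hx'.1, hx'.2]
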